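/- Kapranov's theorem in one variable: Let K be an algebraically closed field with a Krull valuation val : K → Γ ∪ {∞}. For every nonzero polynomial f ∈ K[x], the hypersurface associated to the tropicalization of f equals the set of values of the nonzero roots of f: V(Tf) = TV(f) = {val(a) : a ∈ K∖{0}, f(a) = 0}. Explicitly, γ ∈ Γ satisfies that the minimum min_{i ∈ E(f)} (val(φ_i) + iγ) over the exponents i with nonzero coefficient φ_i is attained at least twice if and only if γ = val(a) for some nonzero root a of f. -/

import Mathlib

open Finset Polynomial

/-- The tropicalization of a one-variable polynomial `f ∈ K[x]`, evaluated at `γ ∈ Γ`: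
`Tf(γ) = min_{i ∈ E(f)} (val φ_i + iγ)`, computed in `Γ ∪ {∞}`. -/
noncomputable def polyTrop {Γ : Type*} [AddCommGroup Γ] [LinearOrder Γ] [IsOrderedAddMonoid Γ]
    {K : Type*} [Field K] (val : K → WithTop Γ) (f : Polynomial K) (γ : Γ) : WithTop Γ :=
  f.support.inf fun i => val (f.coeff i) + WithTop.some (i • γ)

/-- `D_γ(Tf)` for a one-variable polynomial: the exponents at which the minimum
defining `Tf(γ)` is attained. -/
def polyTropD {Γ : Type*} [AddCommGroup Γ] [LinearOrder Γ] [IsOrderedAddMonoid Γ]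
    {K : Type*} [Field K] (val : K → WithTop Γ) (f : Polynomial K) (γ : Γ) : Set ℕ :=
  {i | i ∈ f.support ∧ polyTrop val f γ = val (f.coeff i) + WithTop.some (i • γ)}

/-!
If the minimum defining `Tf(γ)` is attained at a single exponent `i₀`, then for every `a` with
`val a = γ` the term `φ_{i₀} a^{i₀}` has strictly smaller value than all other terms of `f(a)`,
so `val (f a) = Tf(γ) ≠ ∞` and `a` is not a root. Conversely, uniqueness of the minimizing
exponent is multiplicative (the minimizer of `f * g` is `i₀ + j₀`, all other pairs of exponents
contributing strictly larger terms to each coefficient), and it holds for nonzero constants and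
for `X - a` with `val a ≠ γ`. Over an algebraically closed field `f` is a product of such factors
unless some root has value `γ`.
-/

section Tropicalization

variable {Γ : Type*} [AddCommGroup Γ] [LinearOrder Γ] [IsOrderedAddMonoid Γ] {K : Type*} [Field K]

theorem WithTop.eq_zero_of_add_self {x : WithTop Γ} (hx : x ≠ ⊤) (h : x = x + x) : x = 0 := by
  lift x to Γ using hx
  exact_mod_cast left_eq_add.1 (by exact_mod_cast h)

theorem AddValuation.map_sum_eq_of_lt {R Γ₀ : Type*} [Ring R]
    [LinearOrderedAddCommMonoidWithTop Γ₀]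
    (v : AddValuation R Γ₀) {ι : Type*} [DecidableEq ι] {s : Finset ι} {F : ι → R} {j : ι}
    (hj : j ∈ s) (hF : ∀ i ∈ s \ {j}, v (F j) < v (F i)) :
    v (∑ i ∈ s, F i) = v (F j) :=
  Valuation.map_sum_eq_of_lt v hj hF

theorem AddValuation.coe_lt_map_sum_add_coe (v : AddValuation K (WithTop Γ)) {ι : Type*}
    {s : Finset ι} {F : ι → K} {c d : Γ} (hF : ∀ i ∈ s, (c : WithTop Γ) < v (F i) + d) :
    (c : WithTop Γ) < v (∑ i ∈ s, F i) + d := by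
  have shift : ∀ x : WithTop Γ, (c : WithTop Γ) < x + d ↔ ((c - d : Γ) : WithTop Γ) < x := by
    intro x
    induction x with
    | top => simp only [WithTop.top_add, WithTop.coe_lt_top]
    | coe x => rw [← WithTop.coe_add, WithTop.coe_lt_coe, WithTop.coe_lt_coe, sub_lt_iff_lt_add]
  rw [shift]
  exact v.map_lt_sum WithTop.coe_ne_top fun i hi => (shift _).1 (hF i hi)

def tropTerm (val : K → WithTop Γ) (f : K[X]) (γ : Γ) (i : ℕ) : WithTop Γ :=
  val (f.coeff i) + (i • γ : Γ)

section AddValuation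

variable (v : AddValuation K (WithTop Γ)) {f g : K[X]} {γ : Γ}

theorem tropTerm_eq_top_iff {i : ℕ} : tropTerm v f γ i = ⊤ ↔ f.coeff i = 0 := by
  simp only [tropTerm, WithTop.add_eq_top, WithTop.coe_ne_top, or_false, v.top_iff]

theorem polyTrop_le_tropTerm (i : ℕ) : polyTrop v f γ ≤ tropTerm v f γ i := by
  by_cases hi : i ∈ f.support
  · exact Finset.inf_le hi
  · simp [(tropTerm_eq_top_iff v).2 (notMem_support_iff.1 hi)]

theorem polyTropD_eq_singleton_iff {i₀ : ℕ} :
    polyTropD v f γ = {i₀} ↔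
      f.coeff i₀ ≠ 0 ∧ ∀ i ≠ i₀, tropTerm v f γ i₀ < tropTerm v f γ i := by
  constructor
  · intro hD
    obtain ⟨hi₀, hmin : polyTrop v f γ = tropTerm v f γ i₀⟩ : i₀ ∈ polyTropD v f γ :=
      hD ▸ Set.mem_singleton i₀
    refine ⟨mem_support_iff.1 hi₀, fun i hi => (hmin ▸ polyTrop_le_tropTerm v i).lt_of_ne ?_⟩
    intro heq
    by_cases hfi : f.coeff i = 0
    · rw [(tropTerm_eq_top_iff v).2 hfi, tropTerm_eq_top_iff] at heq
      exact mem_support_iff.1 hi₀ heq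
    · have : i ∈ polyTropD v f γ := ⟨mem_support_iff.2 hfi, hmin.trans heq⟩
      exact hi (Set.mem_singleton_iff.1 (hD ▸ this))
  · rintro ⟨hi₀, hlt⟩
    have hmin : polyTrop v f γ = tropTerm v f γ i₀ :=
      le_antisymm (polyTrop_le_tropTerm v i₀) <| Finset.le_inf fun i _ => by
        rcases eq_or_ne i i₀ with rfl | hi
        · exact le_rfl
        · exact (hlt i hi).le
    ext i
    refine ⟨fun hi => by_contra fun hne => (hlt i hne).ne (hmin ▸ hi.2), ?_⟩
    rintro rfl
    exact ⟨mem_support_iff.2 hi₀, hmin⟩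

theorem polyTropD_nonempty (hf : f ≠ 0) : (polyTropD v f γ).Nonempty := by
  obtain ⟨i, hi, he⟩ := Finset.exists_mem_eq_inf f.support (support_nonempty.2 hf) (tropTerm v f γ)
  exact ⟨i, hi, he⟩

theorem valuation_eval_of_polyTropD_eq_singleton {i₀ : ℕ} (hD : polyTropD v f γ = {i₀}) {a : K}
    (ha : v a = γ) : v (f.eval a) = tropTerm v f γ i₀ := by
  classical
  obtain ⟨hi₀, hlt⟩ := (polyTropD_eq_singleton_iff v).1 hD
  have hterm : ∀ i, v (f.coeff i * a ^ i) = tropTerm v f γ i := fun i => by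
    rw [v.map_mul, v.map_pow, ha, tropTerm, WithTop.coe_nsmul]
  rw [eval_eq_sum, sum_def, v.map_sum_eq_of_lt (mem_support_iff.2 hi₀), hterm]
  intro i hi
  rw [hterm, hterm]
  exact hlt i (Finset.notMem_singleton.1 (Finset.mem_sdiff.1 hi).2)

theorem polyTropD_C {c : K} (hc : c ≠ 0) : polyTropD v (C c) γ = {0} := by
  refine (polyTropD_eq_singleton_iff v).2 ⟨by simpa using hc, fun i hi => ?_⟩
  rw [(tropTerm_eq_top_iff v).2 (coeff_C_of_ne_zero hi), lt_top_iff_ne_top, Ne,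
    tropTerm_eq_top_iff, coeff_C_zero]
  exact hc

theorem exists_polyTropD_X_sub_C_eq_singleton {a : K} (ha : v a ≠ γ) :
    ∃ i, polyTropD v (X - C a) γ = {i} := by
  have h0 : tropTerm v (X - C a) γ 0 = v a := by simp [tropTerm]
  have h1 : tropTerm v (X - C a) γ 1 = γ := by simp [tropTerm]
  have h2 : ∀ i, tropTerm v (X - C a) γ (i + 2) = ⊤ := fun i => by
    simp [tropTerm_eq_top_iff, coeff_X]
  rcases ha.lt_or_gt with hlt | hgt
  · refine ⟨0, (polyTropD_eq_singleton_iff v).2 ⟨?_, ?_⟩⟩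
    · rw [Ne, ← tropTerm_eq_top_iff v (γ := γ), h0]
      exact (hlt.trans (WithTop.coe_lt_top γ)).ne
    · rintro (_ | _ | i) hi
      · exact absurd rfl hi
      · rwa [h0, h1]
      · rw [h0, h2]
        exact hlt.trans (WithTop.coe_lt_top γ)
  · refine ⟨1, (polyTropD_eq_singleton_iff v).2 ⟨by simp, ?_⟩⟩
    rintro (_ | _ | i) hi
    · rwa [h0, h1]
    · exact absurd rfl hi
    · rw [h1, h2]
      exact WithTop.coe_lt_top γ

theorem valuation_coeff_mul_coeff_add_nsmul {p q k : ℕ} (hk : p + q = k) :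
    v (f.coeff p * g.coeff q) + (k • γ : Γ) = tropTerm v f γ p + tropTerm v g γ q := by
  rw [v.map_mul, ← hk, add_nsmul, WithTop.coe_add, tropTerm, tropTerm, add_add_add_comm]

theorem tropTerm_add_lt_of_ne {i j p q : ℕ} (hf : polyTropD v f γ = {i})
    (hg : polyTropD v g γ = {j}) (hpq : (p, q) ≠ (i, j)) :
    tropTerm v f γ i + tropTerm v g γ j < tropTerm v f γ p + tropTerm v g γ q := by
  obtain ⟨hfi, hfmin⟩ := (polyTropD_eq_singleton_iff v).1 hf
  obtain ⟨hgj, hgmin⟩ := (polyTropD_eq_singleton_iff v).1 hg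
  have hfi_top : tropTerm v f γ i ≠ ⊤ := (tropTerm_eq_top_iff v).not.2 hfi
  have hgj_top : tropTerm v g γ j ≠ ⊤ := (tropTerm_eq_top_iff v).not.2 hgj
  rcases eq_or_ne p i with rfl | hp
  · exact WithTop.add_lt_add_left hfi_top (hgmin q fun hq => hpq (hq ▸ rfl))
  · refine WithTop.add_lt_add_of_lt_of_le hgj_top (hfmin p hp) ?_
    rcases eq_or_ne q j with rfl | hq
    exacts [le_rfl, (hgmin q hq).le]

theorem polyTropD_mul {i j : ℕ} (hf : polyTropD v f γ = {i}) (hg : polyTropD v g γ = {j}) :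
    polyTropD v (f * g) γ = {i + j} := by
  classical
  have hT : tropTerm v f γ i + tropTerm v g γ j ≠ ⊤ := by
    simp only [Ne, WithTop.add_eq_top, tropTerm_eq_top_iff, not_or]
    exact ⟨((polyTropD_eq_singleton_iff v).1 hf).1, ((polyTropD_eq_singleton_iff v).1 hg).1⟩
  have hij : tropTerm v (f * g) γ (i + j) = tropTerm v f γ i + tropTerm v g γ j := by
    have hmem : (i, j) ∈ antidiagonal (i + j) := mem_antidiagonal.2 rfl
    rw [tropTerm, coeff_mul, v.map_sum_eq_of_lt hmem, valuation_coeff_mul_coeff_add_nsmul v rfl]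
    rintro ⟨p, q⟩ hpq
    obtain ⟨hpq, hne⟩ := Finset.mem_sdiff.1 hpq
    rw [← WithTop.add_lt_add_iff_right (WithTop.coe_ne_top (a := (i + j) • γ)),
      valuation_coeff_mul_coeff_add_nsmul v rfl,
      valuation_coeff_mul_coeff_add_nsmul v (mem_antidiagonal.1 hpq)]
    exact tropTerm_add_lt_of_ne v hf hg (Finset.notMem_singleton.1 hne)
  have hlt : ∀ k ≠ i + j, tropTerm v f γ i + tropTerm v g γ j < tropTerm v (f * g) γ k := by
    intro k hk
    obtain ⟨t, ht⟩ := WithTop.ne_top_iff_exists.1 hT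
    rw [← ht, tropTerm, coeff_mul]
    refine v.coe_lt_map_sum_add_coe fun ⟨p, q⟩ hpq => ?_
    rw [ht, valuation_coeff_mul_coeff_add_nsmul v (mem_antidiagonal.1 hpq)]
    refine tropTerm_add_lt_of_ne v hf hg fun h => hk ?_
    obtain ⟨rfl, rfl⟩ := Prod.mk.inj h
    exact (mem_antidiagonal.1 hpq).symm
  refine (polyTropD_eq_singleton_iff v).2 ⟨?_, fun k hk => hij ▸ hlt k hk⟩
  rw [Ne, ← tropTerm_eq_top_iff v (γ := γ), hij]
  exact hT

theorem exists_polyTropD_multiset_prod_eq_singleton (s : Multiset K[X])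
    (hs : ∀ p ∈ s, ∃ i, polyTropD v p γ = {i}) : ∃ i, polyTropD v s.prod γ = {i} := by
  induction s using Multiset.induction_on with
  | empty => exact ⟨0, by simpa using polyTropD_C v one_ne_zero⟩
  | cons p s ih =>
    obtain ⟨i, hi⟩ := hs p (Multiset.mem_cons_self p s)
    obtain ⟨j, hj⟩ := ih fun q hq => hs q (Multiset.mem_cons_of_mem hq)
    exact ⟨i + j, Multiset.prod_cons p s ▸ polyTropD_mul v hi hj⟩

theorem exists_polyTropD_eq_singleton_of_splits (hsplit : f.Splits) (hf : f ≠ 0)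
    (hroots : ∀ a ∈ f.roots, v a ≠ γ) : ∃ i, polyTropD v f γ = {i} := by
  obtain ⟨j, hj⟩ := exists_polyTropD_multiset_prod_eq_singleton v (f.roots.map (X - C ·)) <| by
    simp only [Multiset.mem_map]
    rintro _ ⟨a, ha, rfl⟩
    exact exists_polyTropD_X_sub_C_eq_singleton v (hroots a ha)
  rw [hsplit.eq_prod_roots]
  exact ⟨0 + j, polyTropD_mul v (polyTropD_C v (leadingCoeff_ne_zero.2 hf)) hj⟩

theorem polyTropD_nontrivial_of_isRoot (hf : f ≠ 0) {a : K} (hroot : f.IsRoot a) (ha : v a = γ) :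
    (polyTropD v f γ).Nontrivial := by
  refine (polyTropD_nonempty v hf).exists_eq_singleton_or_nontrivial.resolve_left ?_
  rintro ⟨i, hi⟩
  have := valuation_eval_of_polyTropD_eq_singleton v hi ha
  rw [hroot.eq_zero, v.map_zero, eq_comm, tropTerm_eq_top_iff] at this
  exact ((polyTropD_eq_singleton_iff v).1 hi).1 this

end AddValuation

end Tropicalization

/-- Kapranov's theorem in one variable: for an algebraically closed valued field `K`
and a nonzero `f ∈ K[x]`, the minimum defining `Tf(γ)` is attained at least twice
if and only if `γ` is the value of a nonzero root of `f`:  `V(Tf) = TV(f)`. -/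
theorem kapranov_one_variable {Γ : Type*} [AddCommGroup Γ] [LinearOrder Γ] [IsOrderedAddMonoid Γ]
    {K : Type*} [Field K] [IsAlgClosed K]
    (val : K → WithTop Γ)
    (hval0 : ∀ x : K, val x = ⊤ ↔ x = 0)
    (hvalmul : ∀ x y : K, val (x * y) = val x + val y)
    (hvaladd : ∀ x y : K, min (val x) (val y) ≤ val (x + y))
    (f : Polynomial K) (hf : f ≠ 0) (γ : Γ) :
    (∃ i j : ℕ, i ≠ j ∧ i ∈ polyTropD val f γ ∧ j ∈ polyTropD val f γ) ↔
      ∃ a : K, a ≠ 0 ∧ f.eval a = 0 ∧ val a = WithTop.some γ := by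
  have hval1 : val 1 = 0 :=
    WithTop.eq_zero_of_add_self ((hval0 1).not.2 one_ne_zero) (by simpa using hvalmul 1 1)
  let v : AddValuation K (WithTop Γ) := .of val ((hval0 0).2 rfl) hval1 hvaladd hvalmul
  change (∃ i j, i ≠ j ∧ i ∈ polyTropD v f γ ∧ j ∈ polyTropD v f γ) ↔
    ∃ a, a ≠ 0 ∧ f.eval a = 0 ∧ v a = γ
  have hnontriv : (∃ i j, i ≠ j ∧ i ∈ polyTropD v f γ ∧ j ∈ polyTropD v f γ) ↔
      (polyTropD v f γ).Nontrivial :=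
    ⟨fun ⟨i, j, hij, hi, hj⟩ => ⟨i, hi, j, hj, hij⟩, fun ⟨i, hi, j, hj, hij⟩ => ⟨i, j, hij, hi, hj⟩⟩
  rw [hnontriv]
  constructor
  · intro hD
    by_contra! hroots
    obtain ⟨i, hi⟩ := exists_polyTropD_eq_singleton_of_splits v (IsAlgClosed.splits f) hf
      fun a ha hva =>
        hroots a (v.ne_top_iff.1 (hva ▸ WithTop.coe_ne_top)) ((mem_roots hf).1 ha) hva
    exact hD.not_subsingleton (hi ▸ Set.subsingleton_singleton)
  · rintro ⟨a, -, hroot, hva⟩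
    exact polyTropD_nontrivial_of_isRoot v hf hroot hva
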